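/- Let 𝔤_λ be a generic oscillator Lie algebra. A bivector r ∈ ⋀²𝔤_λ is a solution of the generalized classical Yang–Baxter equation if and only if there exist u₀ ∈ S, r₀ ∈ ⋀²S, and α ∈ ℝ such that r = 2α e₀∧e₋₁ + e₀∧u₀ + r₀ and ω_{r₀, ad_{e₋₁}† r₀} + α (ad_{e₋₁}† ∘ ad_{e₋₁}†)(r₀) = 0. -/

import Mathlib

open Module LinearMap

noncomputable section

/-- Index type for the basis of an oscillator Lie algebra:
`Sum.inl 0 ↦ e₋₁`, `Sum.inl 1 ↦ e₀`, `Sum.inr (Sum.inl i) ↦ eᵢ`,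
`Sum.inr (Sum.inr i) ↦ ěᵢ`. -/
abbrev OscIdx (n : ℕ) := Fin 2 ⊕ (Fin n ⊕ Fin n)

/-- The oscillator Lie algebra `𝔤_λ`: a real Lie algebra `L` together with a basis
`{e₋₁, e₀, e₁, …, eₙ, ě₁, …, ěₙ}` whose nonzero brackets on basis vectors are
`[e₋₁, eⱼ] = λⱼ ěⱼ`, `[e₋₁, ěⱼ] = −λⱼ eⱼ`, `[eⱼ, ěⱼ] = e₀` (all other brackets of the
basis vectors vanish or follow by antisymmetry; in particular `e₀` is central). -/
structure OscAlg (n : ℕ) (lam : Fin n → ℝ) (L : Type) [LieRing L] [LieAlgebra ℝ L] where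
  basis : Basis (OscIdx n) ℝ L
  bracket_em_e : ∀ j, ⁅basis (Sum.inl 0), basis (Sum.inr (Sum.inl j))⁆
      = lam j • basis (Sum.inr (Sum.inr j))
  bracket_em_f : ∀ j, ⁅basis (Sum.inl 0), basis (Sum.inr (Sum.inr j))⁆
      = -lam j • basis (Sum.inr (Sum.inl j))
  bracket_e_f : ∀ i j, ⁅basis (Sum.inr (Sum.inl i)), basis (Sum.inr (Sum.inr j))⁆
      = if i = j then basis (Sum.inl 1) else 0
  bracket_e_e : ∀ i j, ⁅basis (Sum.inr (Sum.inl i)), basis (Sum.inr (Sum.inl j))⁆ = 0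
  bracket_f_f : ∀ i j, ⁅basis (Sum.inr (Sum.inr i)), basis (Sum.inr (Sum.inr j))⁆ = 0
  bracket_e0 : ∀ x : L, ⁅basis (Sum.inl 1), x⁆ = 0

/-- `0 < λ₁ ≤ … ≤ λₙ`: the standing assumption on the parameters of an oscillator
Lie algebra. -/
def OscParam {n : ℕ} (lam : Fin n → ℝ) : Prop := (∀ i, 0 < lam i) ∧ Monotone lam

/-- Genericity: `0 < λ₁ < … < λₙ` and `λ_k ≠ λ_i + λ_j` for all `i < j < k`. -/
def IsGeneric {n : ℕ} (lam : Fin n → ℝ) : Prop :=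
  (∀ i, 0 < lam i) ∧ StrictMono lam ∧
    ∀ i j k : Fin n, i < j → j < k → lam k ≠ lam i + lam j

namespace OscAlg

variable {n : ℕ} {lam : Fin n → ℝ} {L : Type} [LieRing L] [LieAlgebra ℝ L]

/-- `e₋₁`. -/
def em (B : OscAlg n lam L) : L := B.basis (Sum.inl 0)
/-- `e₀`. -/
def e0 (B : OscAlg n lam L) : L := B.basis (Sum.inl 1)
/-- `eᵢ`. -/
def e (B : OscAlg n lam L) (i : Fin n) : L := B.basis (Sum.inr (Sum.inl i))
/-- `ěᵢ`. -/
def f (B : OscAlg n lam L) (i : Fin n) : L := B.basis (Sum.inr (Sum.inr i))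
/-- `e₋₁*`, an element of the dual basis. -/
def em' (B : OscAlg n lam L) : Dual ℝ L := B.basis.coord (Sum.inl 0)
/-- `e₀*`. -/
def e0' (B : OscAlg n lam L) : Dual ℝ L := B.basis.coord (Sum.inl 1)
/-- `eᵢ*`. -/
def e' (B : OscAlg n lam L) (i : Fin n) : Dual ℝ L := B.basis.coord (Sum.inr (Sum.inl i))
/-- `ěᵢ*`. -/
def f' (B : OscAlg n lam L) (i : Fin n) : Dual ℝ L := B.basis.coord (Sum.inr (Sum.inr i))

/-- The subspace `S` spanned by the `eᵢ, ěᵢ`. -/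
def S (B : OscAlg n lam L) : Submodule ℝ L :=
  Submodule.span ℝ (Set.range B.e ∪ Set.range B.f)

/-- The `2`-form `ω` on `𝔤_λ`, viewed as a linear map `𝔤_λ → 𝔤_λ*`:
`ω(e₋₁,·) = ω(e₀,·) = 0`, `ω(eᵢ,eⱼ) = ω(ěᵢ,ěⱼ) = 0`, `ω(eᵢ,ěⱼ) = δᵢⱼ`. -/
def om (B : OscAlg n lam L) : L →ₗ[ℝ] Dual ℝ L :=
  ∑ i : Fin n, ((B.e' i).smulRight (B.f' i) - (B.f' i).smulRight (B.e' i))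

/-- The derivation `J_a` of `𝔤_λ` given by `J_a(e₋₁) = J_a(e₀) = 0`, `J_a(eᵢ) = aᵢ ěᵢ`,
`J_a(ěᵢ) = −aᵢ eᵢ`. -/
def Ja (B : OscAlg n lam L) (a : Fin n → ℝ) : L →ₗ[ℝ] L :=
  B.basis.constr ℝ (Sum.elim (fun _ => (0 : L))
    (Sum.elim (fun i => a i • B.f i) (fun i => -(a i) • B.e i)))

end OscAlg

section Bivectors

variable {L : Type} [LieRing L] [LieAlgebra ℝ L]

/-- `x ∧ y`, viewed as the linear map `𝔤* → 𝔤`, `α ↦ α(x) y − α(y) x`; this corresponds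
to the skew-symmetric bilinear form `(α,β) ↦ α(x)β(y) − α(y)β(x)` on `𝔤*`. -/
def wedge (x y : L) : Dual ℝ L →ₗ[ℝ] L :=
  (Module.Dual.eval ℝ L x).smulRight y - (Module.Dual.eval ℝ L y).smulRight x

/-- A bivector `r ∈ ⋀²𝔤`, identified with the linear map `r_# : 𝔤* → 𝔤` of the
corresponding skew-symmetric bilinear form on `𝔤*` (so `r(α,β) = β(r_#(α))`). -/
def IsBivector (r : Dual ℝ L →ₗ[ℝ] L) : Prop := ∀ α β : Dual ℝ L, α (r β) = - β (r α)

/-- The coadjoint action `ad*_u α := α ∘ ad_u`. -/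
def coad (u : L) : Dual ℝ L →ₗ[ℝ] Dual ℝ L := (LieAlgebra.ad ℝ L u).dualMap

/-- `J† r` for an endomorphism `J` of `𝔤`; in terms of bilinear forms,
`(J† r)(α,β) = r(α∘J, β) + r(α, β∘J)`. -/
def dag (J : L →ₗ[ℝ] L) (r : Dual ℝ L →ₗ[ℝ] L) : Dual ℝ L →ₗ[ℝ] L :=
  r ∘ₗ J.dualMap + J ∘ₗ r

/-- The adjoint action `ad_u† r` of `u ∈ 𝔤` on bivectors:
`(ad_u† r)(α,β) = r(ad*_u α, β) + r(α, ad*_u β)`. -/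
def adDag (u : L) (r : Dual ℝ L →ₗ[ℝ] L) : Dual ℝ L →ₗ[ℝ] L :=
  dag (LieAlgebra.ad ℝ L u) r

/-- The Schouten bracket `[r,r]` of a bivector with itself:
`[r,r](α,β,γ) = 2α([r_#β, r_#γ]) + 2β([r_#γ, r_#α]) + 2γ([r_#α, r_#β])`. -/
def schouten (r : Dual ℝ L →ₗ[ℝ] L) (α β γ : Dual ℝ L) : ℝ :=
  2 * α ⁅r β, r γ⁆ + 2 * β ⁅r γ, r α⁆ + 2 * γ ⁅r α, r β⁆

/-- `r` is a solution of the classical Yang–Baxter equation: `[r,r] = 0`. -/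
def IsCYBE (r : Dual ℝ L →ₗ[ℝ] L) : Prop := ∀ α β γ : Dual ℝ L, schouten r α β γ = 0

/-- `r` is a solution of the generalized classical Yang–Baxter equation:
`ad_u [r,r] = 0` for all `u`. -/
def IsGCYBE (r : Dual ℝ L →ₗ[ℝ] L) : Prop :=
  ∀ (u : L) (α β γ : Dual ℝ L),
    schouten r (coad u α) β γ + schouten r α (coad u β) γ + schouten r α β (coad u γ) = 0

/-- A derivation of the Lie algebra `L`. -/
def IsDerivation (J : L →ₗ[ℝ] L) : Prop := ∀ x y : L, J ⁅x, y⁆ = ⁅J x, y⁆ + ⁅x, J y⁆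

/-- The 1-cocycle condition for `ξ : 𝔤 → ⋀²𝔤` with respect to the adjoint action:
`ξ([u,v]) = ad_u† ξ(v) − ad_v† ξ(u)`. -/
def IsCocycle (ξ : L →ₗ[ℝ] (Dual ℝ L →ₗ[ℝ] L)) : Prop :=
  ∀ u v : L, ξ ⁅u, v⁆ = adDag u (ξ v) - adDag v (ξ u)

/-- The dual bracket `[α,β]*` associated to `ξ : 𝔤 → ⋀²𝔤`:
`[α,β]*(u) = ξ(u)(α,β)`. -/
def dualBr (ξ : L →ₗ[ℝ] (Dual ℝ L →ₗ[ℝ] L)) (α β : Dual ℝ L) : Dual ℝ L :=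
  (β : L →ₗ[ℝ] ℝ) ∘ₗ (ξ.flip α)

/-- `ξ : 𝔤 → ⋀²𝔤` is a Lie bialgebra structure: `ξ` takes values in bivectors, is a
1-cocycle, and the dual bracket satisfies the Jacobi identity. -/
def IsBialgebra (ξ : L →ₗ[ℝ] (Dual ℝ L →ₗ[ℝ] L)) : Prop :=
  (∀ (u : L) (α β : Dual ℝ L), α (ξ u β) = - β (ξ u α)) ∧ IsCocycle ξ ∧
  ∀ α β γ : Dual ℝ L,
    dualBr ξ (dualBr ξ α β) γ + dualBr ξ (dualBr ξ β γ) α + dualBr ξ (dualBr ξ γ α) β = 0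

end Bivectors

namespace OscAlg

variable {n : ℕ} {lam : Fin n → ℝ} {L : Type} [LieRing L] [LieAlgebra ℝ L]

/-- Membership in `⋀²S`: a bivector `r` with `r_#(e₋₁*) = r_#(e₀*) = 0` and
`Im r_# ⊆ S`. -/
def InW2S (B : OscAlg n lam L) (r : Dual ℝ L →ₗ[ℝ] L) : Prop :=
  IsBivector r ∧ r B.em' = 0 ∧ r B.e0' = 0 ∧ ∀ α : Dual ℝ L, r α ∈ B.S

/-- `ω_{r₁,r₂}(α,β) = (1/2)(ω(r₁_#(α), r₂_#(β)) + ω(r₂_#(α), r₁_#(β)))`. -/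
def omPair (B : OscAlg n lam L) (r₁ r₂ : Dual ℝ L →ₗ[ℝ] L) (α β : Dual ℝ L) : ℝ :=
  (1/2) * (B.om (r₁ α) (r₂ β) + B.om (r₂ α) (r₁ β))

end OscAlg

/-!
With `J = ad_{e₋₁}`, the bracket of `𝔤_λ` reads `[x, y] = e₋₁*(x) J y − e₋₁*(y) J x + ω(x, y) e₀`,
so `[r,r]` is expressed through `e₋₁* ∘ r_#`, `J` and `ω` alone.

If `r` solves the generalized equation, evaluating `ad_{eᵢ}[r,r]` at `(e₋₁*, e₀*, eᵢ*)` gives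
`λᵢ (eᵢ*(p)² + ěᵢ*(p)²) = 0` for `p = r_#(e₋₁*)`. As `λᵢ > 0`, `p ∈ ℝ e₀`, and this is exactly
what is needed to write `r = 2a e₀∧e₋₁ + e₀∧u₀ + r₀`.

For `r` of this form `e₋₁*(r_# δ) = 2a δ(e₀)`, so `[r,r] = 2 e₀ ∧ T` for an explicit bivector `T`,
and `ad_u[r,r] = 2 e₀ ∧ ad_u T` because `e₀` is central. When `e₋₁*(u) = 0` the bivector
`ad_u T` is divisible by `e₀`, while modulo `e₀` the bivector `ad_{e₋₁} T` is twice
`ω_{r₀, ad_{e₋₁}† r₀} + a (ad_{e₋₁}†)² r₀`.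
-/

section Bivectors

variable {L : Type} [LieRing L] [LieAlgebra ℝ L]

lemma wedge_apply (x y : L) (δ : Dual ℝ L) : wedge x y δ = δ x • y - δ y • x := rfl

lemma isBivector_wedge (x y : L) : IsBivector (wedge x y) := by
  intro α β
  simp only [wedge_apply, map_sub, map_smul, smul_eq_mul]
  ring

lemma IsBivector.add {r s : Dual ℝ L →ₗ[ℝ] L} (hr : IsBivector r) (hs : IsBivector s) :
    IsBivector (r + s) := by
  intro α β
  simp only [LinearMap.add_apply, map_add, hr α β, hs α β, neg_add]

lemma IsBivector.sub {r s : Dual ℝ L →ₗ[ℝ] L} (hr : IsBivector r) (hs : IsBivector s) :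
    IsBivector (r - s) := by
  intro α β
  simp only [LinearMap.sub_apply, map_sub, hr α β, hs α β, neg_sub_neg, neg_sub]

lemma IsBivector.smul {r : Dual ℝ L →ₗ[ℝ] L} (hr : IsBivector r) (c : ℝ) :
    IsBivector (c • r) := by
  intro α β
  simp only [LinearMap.smul_apply, map_smul, hr α β, smul_eq_mul, mul_neg]

lemma IsBivector.apply_self {r : Dual ℝ L →ₗ[ℝ] L} (hr : IsBivector r) (α : Dual ℝ L) :
    α (r α) = 0 := by
  linarith [hr α α]

lemma coad_apply (u : L) (δ : Dual ℝ L) (x : L) : coad u δ x = δ ⁅u, x⁆ := rfl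

lemma coad_smul_add (c : ℝ) (x y : L) (δ : Dual ℝ L) :
    coad (c • x + y) δ = c • coad x δ + coad y δ := by
  ext z
  simp [coad_apply, add_lie, smul_lie]

def adSchouten (r : Dual ℝ L →ₗ[ℝ] L) (u : L) (α β γ : Dual ℝ L) : ℝ :=
  schouten r (coad u α) β γ + schouten r α (coad u β) γ + schouten r α β (coad u γ)

lemma adSchouten_smul_add (r : Dual ℝ L →ₗ[ℝ] L) (c : ℝ) (x y : L) (α β γ : Dual ℝ L) :
    adSchouten r (c • x + y) α β γ = c * adSchouten r x α β γ + adSchouten r y α β γ := by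
  simp only [adSchouten, schouten, coad_smul_add, map_add, map_smul, lie_add, add_lie,
    lie_smul, smul_lie, LinearMap.add_apply, LinearMap.smul_apply, smul_eq_mul]
  ring

end Bivectors

namespace OscAlg

variable {n : ℕ} {lam : Fin n → ℝ} {L : Type} [LieRing L] [LieAlgebra ℝ L] (B : OscAlg n lam L)

@[simp] lemma em'_em : B.em' B.em = 1 := by simp [em', em]
@[simp] lemma em'_e0 : B.em' B.e0 = 0 := by simp [em', e0]
@[simp] lemma em'_e (i : Fin n) : B.em' (B.e i) = 0 := by simp [em', e]
@[simp] lemma em'_f (i : Fin n) : B.em' (B.f i) = 0 := by simp [em', f]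
@[simp] lemma e0'_em : B.e0' B.em = 0 := by simp [e0', em]
@[simp] lemma e0'_e0 : B.e0' B.e0 = 1 := by simp [e0', e0]
@[simp] lemma e0'_e (i : Fin n) : B.e0' (B.e i) = 0 := by simp [e0', e]
@[simp] lemma e0'_f (i : Fin n) : B.e0' (B.f i) = 0 := by simp [e0', f]
@[simp] lemma e'_em (i : Fin n) : B.e' i B.em = 0 := by simp [e', em]
@[simp] lemma e'_e0 (i : Fin n) : B.e' i B.e0 = 0 := by simp [e', e0]
@[simp] lemma e'_e (i j : Fin n) : B.e' i (B.e j) = if j = i then 1 else 0 := by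
  simp [e', e, Finsupp.single_apply]
@[simp] lemma e'_f (i j : Fin n) : B.e' i (B.f j) = 0 := by simp [e', f]
@[simp] lemma f'_em (i : Fin n) : B.f' i B.em = 0 := by simp [f', em]
@[simp] lemma f'_e0 (i : Fin n) : B.f' i B.e0 = 0 := by simp [f', e0]
@[simp] lemma f'_e (i j : Fin n) : B.f' i (B.e j) = 0 := by simp [f', e]
@[simp] lemma f'_f (i j : Fin n) : B.f' i (B.f j) = if j = i then 1 else 0 := by
  simp [f', f, Finsupp.single_apply]

@[simp] lemma Ja_em (a : Fin n → ℝ) : B.Ja a B.em = 0 := by simp [Ja, em]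
@[simp] lemma Ja_e0 (a : Fin n → ℝ) : B.Ja a B.e0 = 0 := by simp [Ja, e0]
@[simp] lemma Ja_e (a : Fin n → ℝ) (i : Fin n) : B.Ja a (B.e i) = a i • B.f i := by simp [Ja, e]
@[simp] lemma Ja_f (a : Fin n → ℝ) (i : Fin n) : B.Ja a (B.f i) = -(a i) • B.e i := by
  simp [Ja, f]

@[simp] lemma basis_inl_zero : B.basis (Sum.inl 0) = B.em := rfl
@[simp] lemma basis_inl_one : B.basis (Sum.inl 1) = B.e0 := rfl
@[simp] lemma basis_inr_inl (i : Fin n) : B.basis (Sum.inr (Sum.inl i)) = B.e i := rfl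
@[simp] lemma basis_inr_inr (i : Fin n) : B.basis (Sum.inr (Sum.inr i)) = B.f i := rfl

lemma linearMap_ext {M : Type*} [AddCommGroup M] [Module ℝ M] {φ ψ : L →ₗ[ℝ] M}
    (h_em : φ B.em = ψ B.em) (h_e0 : φ B.e0 = ψ B.e0) (h_e : ∀ i, φ (B.e i) = ψ (B.e i))
    (h_f : ∀ i, φ (B.f i) = ψ (B.f i)) : φ = ψ := by
  refine B.basis.ext ?_
  rintro (j | i | i)
  · fin_cases j
    exacts [h_em, h_e0]
  exacts [h_e i, h_f i]

lemma ext_elem {x y : L} (h_em : B.em' x = B.em' y) (h_e0 : B.e0' x = B.e0' y)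
    (h_e : ∀ i, B.e' i x = B.e' i y) (h_f : ∀ i, B.f' i x = B.f' i y) : x = y := by
  refine B.basis.ext_elem fun k => ?_
  rcases k with j | i | i
  · fin_cases j
    exacts [h_em, h_e0]
  exacts [h_e i, h_f i]

@[simp] lemma em'_Ja (a : Fin n → ℝ) (x : L) : B.em' (B.Ja a x) = 0 :=
  LinearMap.congr_fun (B.linearMap_ext (φ := B.em' ∘ₗ B.Ja a) (ψ := 0)
    (by simp) (by simp) (by simp) (by simp)) x

@[simp] lemma e0'_Ja (a : Fin n → ℝ) (x : L) : B.e0' (B.Ja a x) = 0 :=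
  LinearMap.congr_fun (B.linearMap_ext (φ := B.e0' ∘ₗ B.Ja a) (ψ := 0)
    (by simp) (by simp) (by simp) (by simp)) x

lemma e'_Ja (a : Fin n → ℝ) (i : Fin n) (x : L) : B.e' i (B.Ja a x) = -(a i) * B.f' i x :=
  LinearMap.congr_fun (B.linearMap_ext (φ := B.e' i ∘ₗ B.Ja a) (ψ := -(a i) • B.f' i)
    (by simp) (by simp) (by simp) (fun j => by by_cases h : j = i <;> simp [h])) x

lemma f'_Ja (a : Fin n → ℝ) (i : Fin n) (x : L) : B.f' i (B.Ja a x) = a i * B.e' i x :=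
  LinearMap.congr_fun (B.linearMap_ext (φ := B.f' i ∘ₗ B.Ja a) (ψ := a i • B.e' i)
    (by simp) (by simp) (fun j => by by_cases h : j = i <;> simp [h]) (by simp)) x

lemma mem_S_iff {x : L} : x ∈ B.S ↔ B.em' x = 0 ∧ B.e0' x = 0 := by
  have hS : Set.range B.e ∪ Set.range B.f = B.basis '' Set.range Sum.inr := by
    ext x; simp [Sum.exists]
  rw [S, hS, Basis.mem_span_image, Set.subset_def]
  simp [Sum.forall, Fin.forall_fin_two, not_imp_comm, em', e0']

lemma om_apply (x y : L) : B.om x y = ∑ i, (B.e' i x * B.f' i y - B.f' i x * B.e' i y) := by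
  simp [om, LinearMap.sum_apply]

lemma om_swap (x y : L) : B.om y x = -B.om x y := by
  simp only [om_apply, ← Finset.sum_neg_distrib]
  exact Finset.sum_congr rfl fun i _ => by ring

@[simp] lemma om_em (y : L) : B.om B.em y = 0 := by simp [om_apply]
@[simp] lemma om_e0 (y : L) : B.om B.e0 y = 0 := by simp [om_apply]
@[simp] lemma om_apply_em (x : L) : B.om x B.em = 0 := by simp [om_apply]
@[simp] lemma om_apply_e0 (x : L) : B.om x B.e0 = 0 := by simp [om_apply]
@[simp] lemma om_e (i : Fin n) : B.om (B.e i) = B.f' i := by ext y; simp [om_apply]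
@[simp] lemma om_f (i : Fin n) : B.om (B.f i) = -B.e' i := by ext y; simp [om_apply]

lemma om_Ja (x y : L) : B.om (B.Ja lam x) y = -B.om x (B.Ja lam y) := by
  simp only [om_apply, e'_Ja, f'_Ja, ← Finset.sum_neg_distrib]
  exact Finset.sum_congr rfl fun i _ => by ring

lemma lie_em_e (i : Fin n) : ⁅B.em, B.e i⁆ = lam i • B.f i := B.bracket_em_e i
lemma lie_em_f (i : Fin n) : ⁅B.em, B.f i⁆ = -lam i • B.e i := B.bracket_em_f i
lemma lie_e_e (i j : Fin n) : ⁅B.e i, B.e j⁆ = 0 := B.bracket_e_e i j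
lemma lie_f_f (i j : Fin n) : ⁅B.f i, B.f j⁆ = 0 := B.bracket_f_f i j
lemma e0_lie (x : L) : ⁅B.e0, x⁆ = 0 := B.bracket_e0 x
lemma lie_e0 (x : L) : ⁅x, B.e0⁆ = 0 := by rw [← lie_skew, e0_lie, neg_zero]

lemma lie_e_f (i j : Fin n) : ⁅B.e i, B.f j⁆ = if j = i then B.e0 else 0 :=
  (B.bracket_e_f i j).trans (if_congr eq_comm rfl rfl)

lemma lie_basis (k l : OscIdx n) :
    ⁅B.basis k, B.basis l⁆ = B.em' (B.basis k) • B.Ja lam (B.basis l)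
      - B.em' (B.basis l) • B.Ja lam (B.basis k) + B.om (B.basis k) (B.basis l) • B.e0 := by
  have h_e_em (i : Fin n) : ⁅B.e i, B.em⁆ = -(lam i • B.f i) := by rw [← lie_skew, lie_em_e]
  have h_f_em (i : Fin n) : ⁅B.f i, B.em⁆ = lam i • B.e i := by
    rw [← lie_skew, lie_em_f, neg_smul, neg_neg]
  have h_f_e (i j : Fin n) : ⁅B.f i, B.e j⁆ = -(if j = i then B.e0 else 0) := by
    rw [← lie_skew]; exact congrArg Neg.neg (B.bracket_e_f j i)
  rcases k with j | i | i <;> rcases l with j' | i' | i' <;> (try fin_cases j) <;>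
    (try fin_cases j') <;>
    simp [h_e_em, h_f_em, h_f_e, lie_e_f, lie_em_e, lie_em_f, lie_e_e, lie_f_f, e0_lie, lie_e0]

lemma lie_eq (x y : L) :
    ⁅x, y⁆ = B.em' x • B.Ja lam y - B.em' y • B.Ja lam x + B.om x y • B.e0 := by
  have h := LinearMap.ext_basis (B := (LieAlgebra.ad ℝ L : L →ₗ[ℝ] Module.End ℝ L))
    (B' := B.em'.smulRight (B.Ja lam) - (B.em'.smulRight (B.Ja lam)).flip
      + B.om.compr₂ (LinearMap.toSpanSingleton ℝ L B.e0)) B.basis B.basis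
    (fun k l => by simpa using B.lie_basis k l)
  simpa using LinearMap.congr_fun₂ h x y

lemma ad_em : (LieAlgebra.ad ℝ L B.em : L →ₗ[ℝ] L) = B.Ja lam := by
  ext x
  simp [B.lie_eq B.em x]

lemma coad_em (δ : Dual ℝ L) : coad B.em δ = δ ∘ₗ B.Ja lam := by
  rw [coad, ad_em]
  rfl

lemma coad_of_em'_eq_zero {s : L} (hs : B.em' s = 0) (δ : Dual ℝ L) :
    coad s δ = -δ (B.Ja lam s) • B.em' + δ B.e0 • B.om s := by
  ext x
  simp only [coad_apply, B.lie_eq s x, hs, zero_smul, zero_sub, map_add, map_neg, map_smul,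
    smul_eq_mul, LinearMap.add_apply, LinearMap.smul_apply]
  ring

lemma coad_apply_e0 (u : L) (δ : Dual ℝ L) : coad u δ B.e0 = 0 := by
  simp [coad_apply, lie_e0]

lemma schouten_eq (r : Dual ℝ L →ₗ[ℝ] L) (α β γ : Dual ℝ L) :
    schouten r α β γ = 2 * (B.em' (r β) * α (B.Ja lam (r γ)) - B.em' (r γ) * α (B.Ja lam (r β))
        + B.om (r β) (r γ) * α B.e0
      + B.em' (r γ) * β (B.Ja lam (r α)) - B.em' (r α) * β (B.Ja lam (r γ))
        + B.om (r γ) (r α) * β B.e0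
      + B.em' (r α) * γ (B.Ja lam (r β)) - B.em' (r β) * γ (B.Ja lam (r α))
        + B.om (r α) (r β) * γ B.e0) := by
  simp only [schouten, B.lie_eq, map_add, map_sub, map_smul, smul_eq_mul]
  ring

lemma lam_mul_sq_add_sq_eq_zero {r : Dual ℝ L →ₗ[ℝ] L} (hr : IsBivector r) (hG : IsGCYBE r)
    (i : Fin n) : lam i * (B.e' i (r B.em') ^ 2 + B.f' i (r B.em') ^ 2) = 0 := by
  have h := hG (B.e i) B.em' B.e0' (B.e' i)
  have hcoad := B.coad_of_em'_eq_zero (B.em'_e i)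
  have c₁ : coad (B.e i) B.em' = 0 := by simp [hcoad]
  have c₂ : coad (B.e i) B.e0' = B.f' i := by simp [hcoad]
  have c₃ : coad (B.e i) (B.e' i) = 0 := by simp [hcoad]
  rw [c₁, c₂, c₃, B.schouten_eq r B.em' (B.f' i) (B.e' i)] at h
  simp only [schouten, LinearMap.zero_apply, map_zero, lie_zero, zero_lie, hr B.em' (B.f' i),
    hr B.em' (B.e' i), hr.apply_self, em'_Ja, em'_e0, f'_e0, e'_e0, e'_Ja, f'_Ja, mul_zero,
    add_zero, zero_add, sub_self, sub_zero, neg_mul, mul_neg, neg_neg] at h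
  linear_combination -h / 2

lemma apply_em'_eq_smul_e0 (hlam : ∀ i, lam i ≠ 0) {r : Dual ℝ L →ₗ[ℝ] L} (hr : IsBivector r)
    (hG : IsGCYBE r) : r B.em' = B.e0' (r B.em') • B.e0 := by
  have hcoord (i : Fin n) : B.e' i (r B.em') = 0 ∧ B.f' i (r B.em') = 0 := by
    have h := (mul_eq_zero.1 (B.lam_mul_sq_add_sq_eq_zero hr hG i)).resolve_left (hlam i)
    obtain ⟨h₁, h₂⟩ := (add_eq_zero_iff_of_nonneg (sq_nonneg _) (sq_nonneg _)).1 h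
    exact ⟨pow_eq_zero_iff two_ne_zero |>.1 h₁, pow_eq_zero_iff two_ne_zero |>.1 h₂⟩
  refine B.ext_elem ?_ ?_ (fun i => ?_) (fun i => ?_)
  · simp [hr.apply_self]
  · simp
  · simp [(hcoord i).1]
  · simp [(hcoord i).2]

lemma inW2S_of_isBivector {r : Dual ℝ L →ₗ[ℝ] L} (hr : IsBivector r)
    (h_em : ∀ δ, B.em' (r δ) = 0) (h_e0 : ∀ δ, B.e0' (r δ) = 0) : B.InW2S r := by
  refine ⟨hr, ?_, ?_, fun δ => B.mem_S_iff.2 ⟨h_em δ, h_e0 δ⟩⟩ <;>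
    refine (Module.forall_dual_apply_eq_zero_iff ℝ _).1 fun δ => ?_
  · rw [hr, h_em, neg_zero]
  · rw [hr, h_e0, neg_zero]

structure IsNormalForm (r : Dual ℝ L →ₗ[ℝ] L) (a : ℝ) (u₀ : L) (r₀ : Dual ℝ L →ₗ[ℝ] L) :
    Prop where
  mem_S : u₀ ∈ B.S
  inW2S : B.InW2S r₀
  eq : r = (2 * a) • wedge B.e0 B.em + wedge B.e0 u₀ + r₀

lemma exists_isNormalForm {r : Dual ℝ L →ₗ[ℝ] L} (hr : IsBivector r) {c : ℝ}
    (hc : r B.em' = c • B.e0) : ∃ a u₀ r₀, B.IsNormalForm r a u₀ r₀ := by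
  set u₀ := r B.e0' + c • B.em
  have hu₀ : B.em' u₀ = 0 ∧ B.e0' u₀ = 0 := by
    constructor <;> simp [u₀, hr B.em' B.e0', hr.apply_self, hc]
  refine ⟨-c / 2, u₀, r + c • wedge B.e0 B.em - wedge B.e0 u₀, ⟨B.mem_S_iff.2 hu₀,
    B.inW2S_of_isBivector ((hr.add ((isBivector_wedge _ _).smul c)).sub (isBivector_wedge _ _))
      (fun δ => ?_) (fun δ => ?_), by module⟩⟩
  · simp [wedge_apply, hu₀, hr B.em' δ, hc]
  · simp only [LinearMap.sub_apply, LinearMap.add_apply, LinearMap.smul_apply, wedge_apply,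
      map_add, map_sub, map_smul, smul_eq_mul, hr B.e0' δ, hr.apply_self, e0'_em, e0'_e0, u₀]
    ring

/-- For `r` in normal form, `[r,r] = 2 e₀ ∧ T` with `T = B.schoutenCofactor r a`. -/
def schoutenCofactor (r : Dual ℝ L →ₗ[ℝ] L) (a : ℝ) (β γ : Dual ℝ L) : ℝ :=
  B.om (r β) (r γ) - 2 * a * (β (B.Ja lam (r γ)) - γ (B.Ja lam (r β)))

def obstruction (r₀ : Dual ℝ L →ₗ[ℝ] L) (a : ℝ) (α β : Dual ℝ L) : ℝ :=
  B.omPair r₀ (adDag B.em r₀) α β + a * β (adDag B.em (adDag B.em r₀) α)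

lemma schoutenCofactor_swap (r : Dual ℝ L →ₗ[ℝ] L) (a : ℝ) (β γ : Dual ℝ L) :
    B.schoutenCofactor r a γ β = -B.schoutenCofactor r a β γ := by
  simp only [schoutenCofactor, B.om_swap (r β)]
  ring

namespace IsNormalForm

variable {B} {r r₀ : Dual ℝ L →ₗ[ℝ] L} {a : ℝ} {u₀ : L} (h : B.IsNormalForm r a u₀ r₀)
include h

lemma apply (δ : Dual ℝ L) :
    r δ = (2 * a) • (δ B.e0 • B.em - δ B.em • B.e0) + (δ B.e0 • u₀ - δ u₀ • B.e0) + r₀ δ := by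
  rw [h.eq]
  rfl

lemma em'_apply (δ : Dual ℝ L) : B.em' (r δ) = 2 * a * δ B.e0 := by
  simp [h.apply, (B.mem_S_iff.1 h.mem_S).1, (B.mem_S_iff.1 (h.inW2S.2.2.2 δ)).1]

lemma apply_em' : r B.em' = -(2 * a) • B.e0 := by
  rw [h.apply, h.inW2S.2.1]
  simp [(B.mem_S_iff.1 h.mem_S).1]

lemma schouten_eq (α β γ : Dual ℝ L) :
    schouten r α β γ = 2 * (α B.e0 * B.schoutenCofactor r a β γ
      + β B.e0 * B.schoutenCofactor r a γ α + γ B.e0 * B.schoutenCofactor r a α β) := by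
  rw [B.schouten_eq, h.em'_apply, h.em'_apply, h.em'_apply, schoutenCofactor,
    schoutenCofactor, schoutenCofactor]
  ring

lemma adSchouten_eq (u : L) (α β γ : Dual ℝ L) :
    adSchouten r u α β γ = 2 *
      (α B.e0 * (B.schoutenCofactor r a (coad u β) γ + B.schoutenCofactor r a β (coad u γ))
      + β B.e0 * (B.schoutenCofactor r a (coad u γ) α + B.schoutenCofactor r a γ (coad u α))
      + γ B.e0 * (B.schoutenCofactor r a (coad u α) β + B.schoutenCofactor r a α (coad u β))) := by
  simp only [adSchouten, h.schouten_eq, coad_apply_e0]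
  ring

lemma schoutenCofactor_coad_of_em'_eq_zero {s : L} (hs : B.em' s = 0) (β γ : Dual ℝ L) :
    B.schoutenCofactor r a (coad s β) γ = β B.e0 * B.schoutenCofactor r a (B.om s) γ := by
  simp only [schoutenCofactor, B.coad_of_em'_eq_zero hs, h.apply_em', map_add, map_smul,
    LinearMap.add_apply, LinearMap.smul_apply, om_e0, Ja_e0, em'_Ja, smul_eq_mul, smul_zero,
    mul_zero, zero_add]
  ring

lemma adSchouten_of_em'_eq_zero {s : L} (hs : B.em' s = 0) (α β γ : Dual ℝ L) :
    adSchouten r s α β γ = 0 := by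
  simp only [h.adSchouten_eq, B.schoutenCofactor_swap r a (coad s _) _,
    h.schoutenCofactor_coad_of_em'_eq_zero hs]
  ring

lemma schoutenCofactor_coad_em (β γ : Dual ℝ L) :
    B.schoutenCofactor r a (coad B.em β) γ + B.schoutenCofactor r a β (coad B.em γ)
      = 2 * B.obstruction r₀ a β γ - γ B.e0 * B.schoutenCofactor r a B.e0' (coad B.em β)
        + β B.e0 * B.schoutenCofactor r a B.e0' (coad B.em γ) := by
  have hu₀ := B.mem_S_iff.1 h.mem_S
  have hr₀ := h.inW2S
  have i₁ := hr₀.1 γ ((β ∘ₗ B.Ja lam) ∘ₗ B.Ja lam)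
  have i₂ := hr₀.1 (γ ∘ₗ B.Ja lam) (β ∘ₗ B.Ja lam)
  have i₃ := B.om_Ja (r₀ β) (r₀ γ)
  have i₄ := B.om_swap u₀ (r₀ (β ∘ₗ B.Ja lam))
  simp only [LinearMap.comp_apply] at i₁ i₂
  simp only [schoutenCofactor, obstruction, omPair, adDag, dag, ad_em, coad_em, h.apply,
    LinearMap.add_apply, LinearMap.sub_apply, LinearMap.neg_apply, LinearMap.smul_apply,
    LinearMap.comp_apply, LinearMap.dualMap_apply', hr₀.2.2.1, hu₀, map_zero, map_add, map_sub,
    map_neg, map_smul, Ja_e0, Ja_em, e0'_e0, e0'_em, e0'_Ja, om_e0, om_em, om_apply_em,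
    om_apply_e0, smul_eq_mul, zero_smul, one_smul, smul_zero, mul_zero, neg_zero, sub_self,
    zero_sub, sub_zero, zero_add, add_zero]
  linear_combination -2 * a * i₁ - 2 * a * i₂ - i₃ + γ B.e0 * i₄

lemma adSchouten_em (α β γ : Dual ℝ L) :
    adSchouten r B.em α β γ = 4 * (α B.e0 * B.obstruction r₀ a β γ
      + β B.e0 * B.obstruction r₀ a γ α + γ B.e0 * B.obstruction r₀ a α β) := by
  rw [h.adSchouten_eq, h.schoutenCofactor_coad_em, h.schoutenCofactor_coad_em,
    h.schoutenCofactor_coad_em]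
  ring

lemma adSchouten_em_e0' (β γ : Dual ℝ L) :
    adSchouten r B.em B.e0' β γ = 4 * B.obstruction r₀ a β γ := by
  have hcoad : coad B.em B.e0' = 0 := by ext x; simp [coad_em]
  have hzero (δ : Dual ℝ L) :
      B.schoutenCofactor r a 0 δ = 0 ∧ B.schoutenCofactor r a δ 0 = 0 := by
    simp [schoutenCofactor]
  rw [h.adSchouten_eq, hcoad, (hzero _).1, (hzero _).2, h.schoutenCofactor_coad_em,
    B.schoutenCofactor_swap r a B.e0' (coad B.em γ), e0'_e0]
  ring

lemma isGCYBE_iff : IsGCYBE r ↔ ∀ β γ, B.obstruction r₀ a β γ = 0 := by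
  refine ⟨fun hG β γ => ?_, fun hC u α β γ => ?_⟩
  · have hE : adSchouten r B.em B.e0' β γ = 0 := hG B.em B.e0' β γ
    rw [h.adSchouten_em_e0'] at hE
    linarith
  · change adSchouten r u α β γ = 0
    rw [← add_sub_cancel (B.em' u • B.em) u, adSchouten_smul_add, h.adSchouten_em,
      h.adSchouten_of_em'_eq_zero (by simp), hC, hC, hC]
    ring

end IsNormalForm

end OscAlg

theorem oscillator_generalized_yang_baxter_classification_general
    {n : ℕ} {lam : Fin n → ℝ} (hgen : IsGeneric lam)
    {L : Type} [LieRing L] [LieAlgebra ℝ L] (B : OscAlg n lam L)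
    (r : Dual ℝ L →ₗ[ℝ] L) (hr : IsBivector r) :
    IsGCYBE r ↔
      ∃ (u₀ : L) (r₀ : Dual ℝ L →ₗ[ℝ] L) (a : ℝ),
        u₀ ∈ B.S ∧ B.InW2S r₀ ∧
        r = (2 * a) • wedge B.e0 B.em + wedge B.e0 u₀ + r₀ ∧
        ∀ α β : Dual ℝ L,
          B.omPair r₀ (adDag B.em r₀) α β
            + a * β (adDag B.em (adDag B.em r₀) α) = 0 := by
  constructor
  · intro hG
    obtain ⟨a, u₀, r₀, hN⟩ :=
      B.exists_isNormalForm hr (B.apply_em'_eq_smul_e0 (fun i => (hgen.1 i).ne') hr hG)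
    exact ⟨u₀, r₀, a, hN.mem_S, hN.inW2S, hN.eq, hN.isGCYBE_iff.1 hG⟩
  · rintro ⟨u₀, r₀, a, hu₀, hr₀, hr_eq, hC⟩
    exact (OscAlg.IsNormalForm.isGCYBE_iff ⟨hu₀, hr₀, hr_eq⟩).2 hC

/-- **Theorem (generalized Yang–Baxter solutions on generic oscillator algebras).**
A bivector `r ∈ ⋀²𝔤_λ` on a generic oscillator Lie algebra is a solution of the
generalized classical Yang–Baxter equation if and only if there exist `u₀ ∈ S`,
`r₀ ∈ ⋀²S` and `α ∈ ℝ` such that `r = 2α e₀∧e₋₁ + e₀∧u₀ + r₀` and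
`ω_{r₀, ad_{e₋₁}† r₀} + α (ad_{e₋₁}† ∘ ad_{e₋₁}†)(r₀) = 0`. -/
theorem oscillator_generalized_yang_baxter_classification
    {n : ℕ} (hn : 0 < n) {lam : Fin n → ℝ} (hgen : IsGeneric lam)
    {L : Type} [LieRing L] [LieAlgebra ℝ L] (B : OscAlg n lam L)
    (r : Dual ℝ L →ₗ[ℝ] L) (hr : IsBivector r) :
    IsGCYBE r ↔
      ∃ (u₀ : L) (r₀ : Dual ℝ L →ₗ[ℝ] L) (a : ℝ),
        u₀ ∈ B.S ∧ B.InW2S r₀ ∧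
        r = (2 * a) • wedge B.e0 B.em + wedge B.e0 u₀ + r₀ ∧
        ∀ α β : Dual ℝ L,
          B.omPair r₀ (adDag B.em r₀) α β
            + a * β (adDag B.em (adDag B.em r₀) α) = 0 :=
  oscillator_generalized_yang_baxter_classification_general hgen B r hr
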